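/- arXiv:2011.09402 — 3 statements merged into one kernel-verified Lean document; each statement's English description precedes it below -/
import Mathlib

section
/- Let A_1, ..., A_m and B_1, ..., B_m be subsets of [n] such that |A_i ∩ B_j| is even if and only if i ≠ j. Then m ≤ n + 1. -/
/-! Over `ZMod 2`, the parity condition says that the product of the incidence matrix of the
`A i` with the transpose of that of the `B j` is the `m × m` identity, so
`m = rank 1 ≤ rank (incidence matrix of A) ≤ n`. -/

open Finset Matrix

section IncidenceMatrix

variable {ι κ α : Type*} [Fintype α] [DecidableEq α]

def Finset.incidenceMatrix (R : Type*) [Zero R] [One R] (A : ι → Finset α) : Matrix ι α R :=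
  Matrix.of fun i k => if k ∈ A i then 1 else 0

theorem Finset.incidenceMatrix_mul_transpose_apply {R : Type*} [NonAssocSemiring R]
    (A : ι → Finset α) (B : κ → Finset α) (i : ι) (j : κ) :
    (incidenceMatrix R A * (incidenceMatrix R B)ᵀ) i j = #(A i ∩ B j) := by
  simp [incidenceMatrix, Matrix.mul_apply, Finset.inter_comm]

end IncidenceMatrix

theorem Matrix.card_le_card_of_mul_eq_one {ι α R : Type*} [Fintype ι] [Fintype α]
    [DecidableEq ι] [CommRing R] [StrongRankCondition R]
    {M : Matrix ι α R} {N : Matrix α ι R} (hMN : M * N = 1) :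
    Fintype.card ι ≤ Fintype.card α := by
  calc Fintype.card ι = (1 : Matrix ι ι R).rank := (rank_one (R := R)).symm
    _ = (M * N).rank := by rw [hMN]
    _ ≤ M.rank := rank_mul_le_left M N
    _ ≤ Fintype.card α := rank_le_card_width M

theorem incidenceMatrix_mul_transpose_eq_one_of_even_inter_iff_ne {ι α : Type*} [Fintype α]
    [DecidableEq ι] [DecidableEq α] {A B : ι → Finset α}
    (h : ∀ i j, Even #(A i ∩ B j) ↔ i ≠ j) :
    incidenceMatrix (ZMod 2) A * (incidenceMatrix (ZMod 2) B)ᵀ = 1 := by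
  ext i j
  rw [incidenceMatrix_mul_transpose_apply, one_apply]
  split_ifs with hij
  · exact ZMod.natCast_eq_one_iff_odd.mpr (Nat.not_even_iff_odd.mp fun he => (h i j).mp he hij)
  · exact ZMod.natCast_eq_zero_iff_even.mpr ((h i j).mpr hij)

/-- Bollobás set pairs modulo 2 on `[n]` have size at most `n + 1`. -/
theorem bollobas_pair_mod_two_upper (n m : ℕ) (A B : Fin m → Finset (Fin n))
    (h : ∀ i j : Fin m, Even ((A i ∩ B j).card) ↔ i ≠ j) :
    m ≤ n + 1 := by
  have hmn := card_le_card_of_mul_eq_one (incidenceMatrix_mul_transpose_eq_one_of_even_inter_iff_ne h)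
  simp only [Fintype.card_fin] at hmn
  omega
end

section
/- Suppose A ⊆ 2^[n] is a family of m distinct sets such that for any three distinct members A, B, C, the intersection |A ∩ B ∩ C| is even, while |A| is odd for each A ∈ A and |A ∩ B| is odd for distinct A, B ∈ A. Then m ≤ n + 1. -/
/-!
Fix `A₀`. Since `(A₀ ∩ Aᵢ) ∩ (A₀ ∩ Aⱼ) = A₀ ∩ Aᵢ ∩ Aⱼ`, the `m - 1` sets `A₀ ∩ Aᵢ` follow the
ordinary oddtown rules: odd sizes, even pairwise intersections. Their characteristic vectors in
`𝔽₂ⁿ` are then orthogonal for the dot product with nonzero squares, hence linearly independent,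
so `m - 1 ≤ n`.
-/

open Finset Matrix

lemma Finset.ite_mem_dotProduct_ite_mem {α R : Type*} [Fintype α] [DecidableEq α]
    [NonAssocSemiring R] (S T : Finset α) :
    (fun x => if x ∈ S then (1 : R) else 0) ⬝ᵥ (fun x => if x ∈ T then 1 else 0) =
      (#(S ∩ T) : R) := by
  simp only [dotProduct, mul_ite, mul_one, mul_zero, ← ite_and, ← mem_inter]
  rw [sum_ite_mem, univ_inter, sum_const, nsmul_one, inter_comm]

theorem Finset.card_le_of_odd_card_of_even_card_inter {α ι : Type*} [Fintype α] [DecidableEq α]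
    [Fintype ι] (B : ι → Finset α) (hodd : ∀ i, Odd #(B i))
    (heven : ∀ i j, i ≠ j → Even #(B i ∩ B j)) :
    Fintype.card ι ≤ Fintype.card α := by
  let v : ι → α → ZMod 2 := fun i x => if x ∈ B i then 1 else 0
  have hdot (i j : ι) : dotProductBilin (ZMod 2) (ZMod 2) (v i) (v j) = #(B i ∩ B j) :=
    ite_mem_dotProduct_ite_mem _ _
  have hli : LinearIndependent (ZMod 2) v := by
    refine LinearMap.BilinForm.linearIndependent_of_iIsOrtho (B := dotProductBilin _ _)
      (fun i j hij => ?_) (fun i => ?_)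
    · exact (hdot i j).trans (ZMod.natCast_eq_zero_iff_even.2 (heven i j hij))
    · rw [hdot, inter_self]
      exact ZMod.natCast_ne_zero_iff_odd.2 (hodd i)
  simpa using hli.fintype_card_le_finrank

theorem oddtown_33_general (n m : ℕ) (A : Fin m → Finset (Fin n))
    (h2 : ∀ i j : Fin m, i ≠ j → Odd ((A i ∩ A j).card))
    (h3 : ∀ i j k : Fin m, i ≠ j → j ≠ k → i ≠ k →
      Even ((A i ∩ A j ∩ A k).card)) :
    m ≤ n + 1 := by
  obtain _ | k := m
  · omega
  have hk : k ≤ n := by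
    simpa using card_le_of_odd_card_of_even_card_inter (fun i : Fin k => A 0 ∩ A i.succ)
      (fun i => h2 0 i.succ (Fin.succ_ne_zero i).symm)
      (fun i j hij => by
        rw [inter_inter_inter_comm, inter_self, ← inter_assoc]
        exact h3 0 i.succ j.succ (Fin.succ_ne_zero i).symm (Fin.succ_injective _ |>.ne hij)
          (Fin.succ_ne_zero j).symm)
  omega

/-- A family following (3,3)-oddtown rules has size at most `n + 1`. -/
theorem oddtown_33 (n m : ℕ) (A : Fin m → Finset (Fin n))
    (hinj : Function.Injective A)
    (h1 : ∀ i, Odd (A i).card)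
    (h2 : ∀ i j : Fin m, i ≠ j → Odd ((A i ∩ A j).card))
    (h3 : ∀ i j k : Fin m, i ≠ j → j ≠ k → i ≠ k →
      Even ((A i ∩ A j ∩ A k).card)) :
    m ≤ n + 1 :=
  oddtown_33_general n m A h2 h3
end

section
/- Let A_{j,i} ⊆ [n] for j ∈ [k], i ∈ [m] with k ≥ 2 be such that |A_{1,i_1} ∩ ... ∩ A_{k,i_k}| is even if and only if at least 2 of the indices i_1, ..., i_k are distinct. Then the pair of families ({A_{1,i} ∩ ... ∩ A_{k−1,i} : i ∈ [m]}, {A_{k,i} : i ∈ [m]}) is a Bollobás set pair modulo 2, and consequently m ≤ n + 1. -/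
/-!
Feeding the tuple `(i, …, i, i')` into the hypothesis gives the set-pair condition for
`C_i = A_{1,i} ∩ ⋯ ∩ A_{k-1,i}` and `D_i = A_{k,i}`, since that tuple has two distinct entries
exactly when `i ≠ i'`. For a set pair modulo 2, the product of the `ZMod 2` indicator matrices
`C Dᵀ` is the identity, so `m = rank (C Dᵀ) ≤ rank C ≤ n`.
-/

open Finset Matrix

section ParityPairs

variable {α ι : Type*} [Fintype α] [DecidableEq α]

def indicatorMatrix (C : ι → Finset α) : Matrix ι α (ZMod 2) :=
  Matrix.of fun i x => if x ∈ C i then 1 else 0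

theorem indicatorMatrix_mul_transpose_apply (C D : ι → Finset α) (i j : ι) :
    (indicatorMatrix C * (indicatorMatrix D)ᵀ) i j = #(C i ∩ D j) := by
  simp [indicatorMatrix, mul_apply, ← ite_and, ← mem_inter, inter_comm]

theorem card_le_card_of_even_card_inter_iff_ne [Fintype ι] (C D : ι → Finset α)
    (h : ∀ i j, Even #(C i ∩ D j) ↔ i ≠ j) : Fintype.card ι ≤ Fintype.card α := by
  classical
  have hone : indicatorMatrix C * (indicatorMatrix D)ᵀ = 1 := by
    ext i j
    rw [indicatorMatrix_mul_transpose_apply, one_apply]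
    split_ifs with hij
    · exact ZMod.natCast_eq_one_iff_odd.2 (Nat.not_even_iff_odd.1 (by simpa [hij] using h j j))
    · exact ZMod.natCast_eq_zero_iff_even.2 ((h i j).2 hij)
  calc Fintype.card ι = (1 : Matrix ι ι (ZMod 2)).rank := rank_one.symm
    _ ≤ (indicatorMatrix C).rank := hone ▸ rank_mul_le_left _ _
    _ ≤ Fintype.card α := rank_le_card_width _

end ParityPairs

section UpdateConst

variable {ι κ : Type*} [Fintype ι] [DecidableEq ι]

theorem image_univ_update_const [DecidableEq κ] {a b : ι} (hba : b ≠ a) (i i' : κ) :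
    univ.image (Function.update (fun _ => i) a i') = {i, i'} := by
  ext x
  simp only [mem_image, mem_univ, true_and, mem_insert, mem_singleton]
  constructor
  · rintro ⟨j, rfl⟩
    by_cases hj : j = a <;> simp [hj]
  · rintro (rfl | rfl)
    · exact ⟨b, by simp [hba]⟩
    · exact ⟨a, by simp⟩

theorem inf_univ_update_const {α : Type*} [SemilatticeInf α] [OrderTop α] (A : ι → κ → α)
    (a : ι) (i i' : κ) :
    univ.inf (fun j => A j (Function.update (fun _ => i) a i' j)) =
      (univ.erase a).inf (fun j => A j i) ⊓ A a i' := by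
  rw [← insert_erase (mem_univ a), inf_insert, erase_insert_eq_erase, erase_idem, inf_comm,
    Function.update_self]
  congr 1
  exact inf_congr rfl fun j hj => by rw [Function.update_of_ne (ne_of_mem_erase hj)]

theorem even_card_inf_erase_inter_iff_ne {α : Type*} [Fintype α] [DecidableEq α]
    [DecidableEq κ] [Nontrivial ι] (A : ι → κ → Finset α)
    (hA : ∀ i : ι → κ, Even #(univ.inf fun j => A j (i j)) ↔ 2 ≤ #(univ.image i))
    (a : ι) (i i' : κ) :
    Even #((univ.erase a).inf (fun j => A j i) ∩ A a i') ↔ i ≠ i' := by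
  obtain ⟨b, hba⟩ := exists_ne a
  rw [← inf_eq_inter, ← inf_univ_update_const, hA, image_univ_update_const hba]
  grind [card_pair_eq_one_or_two, card_pair_eq_two_iff]

end UpdateConst

/-- From a Bollobás set `(k,2)`-tuple modulo 2, the families
`C_i = A_{1,i} ∩ ⋯ ∩ A_{k-1,i}` and `D_i = A_{k,i}` form a Bollobás set pair
modulo 2, and consequently `m ≤ n + 1`. -/
theorem bollobas_k2_tuple (n m k : ℕ) (hk : 2 ≤ k)
    (A : Fin k → Fin m → Finset (Fin n))
    (hA : ∀ i : Fin k → Fin m,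
      Even ((Finset.inf (Finset.univ : Finset (Fin k)) fun j => A j (i j)).card) ↔
        2 ≤ ((Finset.univ : Finset (Fin k)).image i).card) :
    (∀ i i' : Fin m,
      Even (((Finset.inf ((Finset.univ : Finset (Fin k)).filter
          fun j => j ≠ (⟨k - 1, by omega⟩ : Fin k)) fun j => A j i) ∩
          A (⟨k - 1, by omega⟩ : Fin k) i').card) ↔ i ≠ i') ∧
    m ≤ n + 1 := by
  have : Nontrivial (Fin k) := Fin.nontrivial_iff_two_le.2 hk
  simp only [filter_ne']
  have hpair := even_card_inf_erase_inter_iff_ne A hA ⟨k - 1, by omega⟩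
  refine ⟨hpair, ?_⟩
  have hmn : m ≤ n := by simpa using card_le_card_of_even_card_inter_iff_ne _ _ hpair
  omega
end
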